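/- arXiv:2504.19359 — 6 statements merged into one kernel-verified Lean document; each statement's English description precedes it below -/
import Mathlib

section
/- Let b and c be real numbers with b² < 4(1+c²). Then every complex root ζ of the polynomial p(ζ) = (1 − ic)ζ² − bζ + (1 + ic) satisfies |ζ| = 1, and p has two distinct roots. -/
/-!
Writing `a = 1 - I * c`, the polynomial is `a z² - b z + conj a`, with discriminant
`b² - 4‖a‖² < 0`. Choosing a real `s ≠ 0` with `b² + s² = 4‖a‖²`, its roots are
`(b ± s I) / (2a)`, distinct since `s ≠ 0`, and their numerators have modulus
`√(b² + s²) = 2‖a‖`, so both roots lie on the unit circle.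
-/

open Complex ComplexConjugate

theorem exists_ne_zero_sq_add_sq_eq {b x : ℝ} (h : b ^ 2 < x) :
    ∃ s : ℝ, s ≠ 0 ∧ b ^ 2 + s ^ 2 = x := by
  refine ⟨√(x - b ^ 2), (Real.sqrt_pos.2 (by linarith)).ne', ?_⟩
  rw [Real.sq_sqrt (by linarith)]
  ring

namespace Complex

variable {a : ℂ} {b s : ℝ}

theorem ne_zero_of_sq_lt_four_mul_norm_sq (h : b ^ 2 < 4 * ‖a‖ ^ 2) : a ≠ 0 :=
  norm_pos_iff.mp (by nlinarith [sq_nonneg b, norm_nonneg a])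

theorem discrim_conj_eq (hs : b ^ 2 + s ^ 2 = 4 * ‖a‖ ^ 2) :
    discrim a (-b) (conj a) = (s * I) * (s * I) := by
  have hs' : (b : ℂ) ^ 2 + (s : ℂ) ^ 2 = 4 * (a * conj a) := by
    rw [mul_conj, normSq_eq_norm_sq]
    exact_mod_cast hs
  rw [discrim]
  linear_combination hs' - (s : ℂ) ^ 2 * I_sq

theorem quadratic_conj_eq_zero_iff (ha : a ≠ 0) (hs : b ^ 2 + s ^ 2 = 4 * ‖a‖ ^ 2) (z : ℂ) :
    a * z ^ 2 - b * z + conj a = 0 ↔ z = (b + s * I) / (2 * a) ∨ z = (b - s * I) / (2 * a) := by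
  rw [← neg_neg (b : ℂ), ← quadratic_eq_zero_iff ha (discrim_conj_eq hs)]
  ring_nf

theorem norm_add_mul_I_of_sq_add_sq (hs : b ^ 2 + s ^ 2 = 4 * ‖a‖ ^ 2) :
    ‖(b : ℂ) + s * I‖ = 2 * ‖a‖ := by
  rw [norm_add_mul_I, hs, show 4 * ‖a‖ ^ 2 = (2 * ‖a‖) ^ 2 by ring]
  exact Real.sqrt_sq (by positivity)

theorem norm_add_mul_I_div_eq_one (ha : a ≠ 0) (hs : b ^ 2 + s ^ 2 = 4 * ‖a‖ ^ 2) :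
    ‖((b : ℂ) + s * I) / (2 * a)‖ = 1 := by
  rw [norm_div, norm_add_mul_I_of_sq_add_sq hs, norm_mul, RCLike.norm_two]
  exact div_self (by positivity)

theorem norm_sub_mul_I_div_eq_one (ha : a ≠ 0) (hs : b ^ 2 + s ^ 2 = 4 * ‖a‖ ^ 2) :
    ‖((b : ℂ) - s * I) / (2 * a)‖ = 1 := by
  have h := norm_add_mul_I_div_eq_one (b := b) (s := -s) ha (by rwa [neg_sq])
  rwa [ofReal_neg, neg_mul, ← sub_eq_add_neg] at h

variable (a b)

theorem norm_eq_one_of_quadratic_conj_eq_zero (h : b ^ 2 < 4 * ‖a‖ ^ 2) {z : ℂ}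
    (hz : a * z ^ 2 - b * z + conj a = 0) : ‖z‖ = 1 := by
  obtain ⟨s, -, hs⟩ := exists_ne_zero_sq_add_sq_eq h
  have ha := ne_zero_of_sq_lt_four_mul_norm_sq h
  rcases (quadratic_conj_eq_zero_iff ha hs z).1 hz with rfl | rfl
  · exact norm_add_mul_I_div_eq_one ha hs
  · exact norm_sub_mul_I_div_eq_one ha hs

theorem exists_ne_quadratic_conj_eq_zero (h : b ^ 2 < 4 * ‖a‖ ^ 2) :
    ∃ z₁ z₂ : ℂ, z₁ ≠ z₂ ∧ a * z₁ ^ 2 - b * z₁ + conj a = 0 ∧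
      a * z₂ ^ 2 - b * z₂ + conj a = 0 := by
  obtain ⟨s, hs0, hs⟩ := exists_ne_zero_sq_add_sq_eq h
  have ha := ne_zero_of_sq_lt_four_mul_norm_sq h
  refine ⟨_, _, ?_, (quadratic_conj_eq_zero_iff ha hs _).2 (.inl rfl),
    (quadratic_conj_eq_zero_iff ha hs _).2 (.inr rfl)⟩
  rw [Ne, div_left_inj' (mul_ne_zero two_ne_zero ha), sub_eq_add_neg, add_right_inj, self_eq_neg,
    mul_eq_zero, not_or]
  exact ⟨ofReal_ne_zero.2 hs0, I_ne_zero⟩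

end Complex

/-- If b² < 4(1+c²) for real b, c, then every complex root of
p(ζ) = (1 − ic)ζ² − bζ + (1 + ic) has modulus 1, and p has two distinct roots. -/
theorem char_poly_roots_modulus_one (b c : ℝ) (h : b ^ 2 < 4 * (1 + c ^ 2)) :
    (∀ ζ : ℂ, (1 - I * c) * ζ ^ 2 - b * ζ + (1 + I * c) = 0 → ‖ζ‖ = 1) ∧
    (∃ ζ₁ ζ₂ : ℂ, ζ₁ ≠ ζ₂ ∧
      (1 - I * c) * ζ₁ ^ 2 - b * ζ₁ + (1 + I * c) = 0 ∧
      (1 - I * c) * ζ₂ ^ 2 - b * ζ₂ + (1 + I * c) = 0) := by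
  have hconj : conj (1 - I * c) = 1 + I * c := by
    simp only [map_sub, map_one, map_mul, conj_I, conj_ofReal, neg_mul, sub_neg_eq_add]
  have hnorm : ‖1 - I * c‖ ^ 2 = 1 + c ^ 2 := by
    rw [show (1 - I * c : ℂ) = (1 : ℝ) + (-c : ℝ) * I by push_cast; ring, norm_add_mul_I,
      Real.sq_sqrt (by positivity)]
    ring
  rw [← hnorm] at h
  rw [← hconj]
  exact ⟨fun _ => norm_eq_one_of_quadratic_conj_eq_zero _ b h,
    exists_ne_quadratic_conj_eq_zero _ b h⟩
end

section
/- Let b and c be real numbers with b² < 4(1+c²), let λ± = (b ± i√(4(1+c²) − b²))/(2(1 − ic)), let G be the 2×2 complex matrix with rows (b/(1 − ic), −(1 + ic)/(1 − ic)) and (1, 0), and let P be the 2×2 matrix with rows (λ₊, λ₋) and (1, 1). Then P is invertible, P⁻¹GP = diag(λ₊, λ₋), and diag(λ₊, λ₋) is a unitary matrix. -/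
open Complex Matrix

/-!
With `s = √(4(1 + c²) - b²) > 0`, the numbers `λ± = (b ± is) / (2(1 - ic))` are the two roots
that the quadratic formula gives for `(1 - ic)ζ² - bζ + (1 + ic)`, whose discriminant is
`b² - 4(1 + c²) = (is)²`. As `G` is the companion matrix of this polynomial, the columns `(λ±, 1)`
of `P` are eigenvectors, independent because `s ≠ 0`. Finally
`|b ± is|² = b² + s² = 4(1 + c²) = |2(1 - ic)|²`, so `|λ±| = 1`.
-/

theorem Matrix.diagonal_mem_unitaryGroup_iff {n α : Type*} [Fintype n] [DecidableEq n]
    [CommRing α] [StarRing α] {d : n → α} :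
    diagonal d ∈ unitaryGroup n α ↔ ∀ i, d i ∈ unitary α := by
  simp only [mem_unitaryGroup_iff', star_eq_conjTranspose, diagonal_conjTranspose,
    diagonal_mul_diagonal, ← diagonal_one, diagonal_injective.eq_iff, funext_iff,
    Unitary.mem_iff_star_mul_self, Pi.star_apply]

theorem Complex.mem_unitary_iff_norm_eq_one {z : ℂ} : z ∈ unitary ℂ ↔ ‖z‖ = 1 := by
  rw [Unitary.mem_iff_star_mul_self, star_def, conj_mul', ← ofReal_pow, ofReal_eq_one,
    pow_eq_one_iff_of_nonneg (norm_nonneg z) two_ne_zero]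

theorem Matrix.inv_mul_mul_eq_of_mul_eq {n α : Type*} [Fintype n] [DecidableEq n] [CommRing α]
    {A P D : Matrix n n α} (hP : IsUnit P.det) (h : A * P = P * D) : P⁻¹ * A * P = D := by
  rw [Matrix.mul_assoc, h, ← Matrix.mul_assoc, nonsing_inv_mul P hP, Matrix.one_mul]

theorem companion_fin_two_mul_eq_mul_diagonal {R : Type*} [CommRing R] {a₀ a₁ l₁ l₂ : R}
    (h₁ : l₁ * l₁ = a₁ * l₁ + a₀) (h₂ : l₂ * l₂ = a₁ * l₂ + a₀) :
    !![a₁, a₀; 1, 0] * !![l₁, l₂; 1, 1] = !![l₁, l₂; 1, 1] * diagonal ![l₁, l₂] := by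
  ext i j
  fin_cases i <;> fin_cases j <;> simp [h₁, h₂]

theorem one_sub_I_mul_ofReal_ne_zero (c : ℝ) : (1 : ℂ) - I * c ≠ 0 := by
  intro h
  simpa using congrArg re h

section AmplificationRoot

variable {b c s : ℝ} (hs : s ^ 2 = 4 * (1 + c ^ 2) - b ^ 2) {l : ℂ}
  (hl : l = (b + I * s) / (2 * (1 - I * c)))
include hs hl

theorem amplification_root_mul_self :
    l * l = b / (1 - I * c) * l + -(1 + I * c) / (1 - I * c) := by
  have hd := one_sub_I_mul_ofReal_ne_zero c
  have hdisc : discrim (1 - I * c) (-b) (1 + I * c) = (I * s) * (I * s) := by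
    have hs' : (s : ℂ) ^ 2 = 4 * (1 + c ^ 2) - b ^ 2 := by exact_mod_cast hs
    rw [discrim]
    linear_combination hs' + (4 * c ^ 2 - s ^ 2 : ℂ) * I_sq
  have hroot : (1 - I * c) * (l * l) + (-b) * l + (1 + I * c) = 0 :=
    (quadratic_eq_zero_iff hd hdisc l).2 (Or.inl (by rw [hl, neg_neg]))
  field_simp
  linear_combination hroot

theorem norm_amplification_root : ‖l‖ = 1 := by
  have hnum : ‖(b : ℂ) + I * s‖ ^ 2 = b ^ 2 + s ^ 2 := by
    rw [Complex.sq_norm, mul_comm, normSq_add_mul_I]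
  have hden : ‖2 * (1 - I * c)‖ ^ 2 = 4 * (1 + c ^ 2) := by
    rw [show (2 : ℂ) * (1 - I * c) = (2 : ℝ) + (-2 * c : ℝ) * I by push_cast; ring,
      Complex.sq_norm, normSq_add_mul_I]
    ring
  have hden_ne : ‖2 * (1 - I * c)‖ ≠ 0 :=
    norm_ne_zero_iff.2 (mul_ne_zero two_ne_zero (one_sub_I_mul_ofReal_ne_zero c))
  rw [hl, norm_div, div_eq_one_iff_eq hden_ne,
    ← sq_eq_sq₀ (norm_nonneg _) (norm_nonneg _), hnum, hden]
  linear_combination hs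

end AmplificationRoot

/-- With b² < 4(1+c²), the eigenvector matrix P = [[λ₊, λ₋], [1, 1]] is invertible,
diagonalizes the amplification matrix G = [[b/(1−ic), −(1+ic)/(1−ic)], [1, 0]],
i.e. P⁻¹GP = diag(λ₊, λ₋), and diag(λ₊, λ₋) is unitary. -/
theorem amplification_matrix_diagonalization (b c : ℝ) (h : b ^ 2 < 4 * (1 + c ^ 2))
    (lamp lamm : ℂ)
    (hp : lamp = (b + I * Real.sqrt (4 * (1 + c ^ 2) - b ^ 2)) / (2 * (1 - I * c)))
    (hm : lamm = (b - I * Real.sqrt (4 * (1 + c ^ 2) - b ^ 2)) / (2 * (1 - I * c)))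
    (G P : Matrix (Fin 2) (Fin 2) ℂ)
    (hG : G = !![b / (1 - I * c), -(1 + I * c) / (1 - I * c); 1, 0])
    (hP : P = !![lamp, lamm; 1, 1]) :
    IsUnit P ∧ P⁻¹ * G * P = Matrix.diagonal ![lamp, lamm] ∧
    Matrix.diagonal ![lamp, lamm] ∈ Matrix.unitaryGroup (Fin 2) ℂ := by
  set s := Real.sqrt (4 * (1 + c ^ 2) - b ^ 2)
  have hs_pos : 0 < s := Real.sqrt_pos.2 (by linarith)
  have hs : s ^ 2 = 4 * (1 + c ^ 2) - b ^ 2 := Real.sq_sqrt (by linarith)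
  have hs_neg : (-s) ^ 2 = 4 * (1 + c ^ 2) - b ^ 2 := by rwa [neg_sq]
  have hm' : lamm = (b + I * ↑(-s)) / (2 * (1 - I * c)) := by rw [hm]; push_cast; ring
  have hdet : IsUnit P.det := by
    rw [hP, det_fin_two_of, mul_one, mul_one, isUnit_iff_ne_zero, sub_ne_zero, hp, hm', Ne,
      div_left_inj' (mul_ne_zero two_ne_zero (one_sub_I_mul_ofReal_ne_zero c)),
      add_right_inj, mul_right_inj' I_ne_zero, ofReal_inj]
    linarith
  refine ⟨(isUnit_iff_isUnit_det P).2 hdet, inv_mul_mul_eq_of_mul_eq hdet ?_, ?_⟩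
  · rw [hG, hP]
    exact companion_fin_two_mul_eq_mul_diagonal (amplification_root_mul_self hs hp)
      (amplification_root_mul_self hs_neg hm')
  · refine diagonal_mem_unitaryGroup_iff.2 fun i => mem_unitary_iff_norm_eq_one.2 ?_
    fin_cases i
    exacts [norm_amplification_root hs hp, norm_amplification_root hs_neg hm']
end

section
/- Let b and c be real numbers with b² < 4(1+c²), let λ± = (b ± i√(4(1+c²) − b²))/(2(1 − ic)), and let P be the 2×2 complex matrix with rows (λ₊, λ₋) and (1, 1). Then the matrix P*P (conjugate transpose of P times P) has rows (2, 1 + conj(λ₊)λ₋) and (1 + conj(λ₋)λ₊, 2), and |1 + conj(λ₊)λ₋| = |b|/√(1+c²). -/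
/-!
With `s = √(4(1 + c²) - b²)`, both roots have modulus one because
`|b ± i s|² = b² + s² = 4(1 + c²) = |2(1 - i c)|²`; this gives the diagonal entries `2`.
Then `1 + λ̄₊ λ₋ = λ̄₊ (λ₊ + λ₋)` and, by Vieta, `λ₊ + λ₋ = b / (1 - i c)`,
so the modulus is `|b| / |1 - i c| = |b| / √(1 + c²)`.
-/

open Complex Matrix

theorem Matrix.conjTranspose_mul_self_of_star_mul_self_eq_one {R : Type*} [Semiring R] [StarRing R]
    {x y : R} (hx : star x * x = 1) (hy : star y * y = 1) :
    (!![x, y; 1, 1])ᴴ * !![x, y; 1, 1] = !![2, 1 + star x * y; 1 + star y * x, 2] := by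
  ext i j
  fin_cases i <;> fin_cases j <;>
    simp [Matrix.mul_apply, hx, hy, one_add_one_eq_two, add_comm]

theorem one_add_star_mul_eq_star_mul_add {R : Type*} [Semiring R] [Star R] {x : R}
    (hx : star x * x = 1) (y : R) : 1 + star x * y = star x * (x + y) := by
  rw [mul_add, hx]

namespace Complex

theorem norm_one_sub_I_mul (c : ℝ) : ‖1 - I * c‖ = √(1 + c ^ 2) := by
  simpa [mul_comm, neg_sq, sub_eq_add_neg] using norm_add_mul_I 1 (-c)

theorem norm_div_two_mul_one_sub_I_mul_eq_one {b c t : ℝ} (h : b ^ 2 + t ^ 2 = 4 * (1 + c ^ 2)) :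
    ‖(b + I * t) / (2 * (1 - I * c))‖ = 1 := by
  have hden : ‖(2 : ℂ) * (1 - I * c)‖ = √(b ^ 2 + t ^ 2) := by
    rw [norm_mul, norm_one_sub_I_mul, h, Real.sqrt_mul' _ (by positivity),
      show (4 : ℝ) = 2 ^ 2 by norm_num, Real.sqrt_sq zero_le_two]
    simp
  have hpos : 0 < √(b ^ 2 + t ^ 2) := Real.sqrt_pos.2 (by nlinarith)
  rw [norm_div, hden, mul_comm I, norm_add_mul_I, div_self hpos.ne']

end Complex

/-- With b² < 4(1+c²), λ± = (b ± i√(4(1+c²) − b²))/(2(1 − ic)) and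
P = [[λ₊, λ₋], [1, 1]], one has
P*P = [[2, 1 + conj(λ₊)λ₋], [1 + conj(λ₋)λ₊, 2]] and
|1 + conj(λ₊)λ₋| = |b|/√(1+c²). -/
theorem PstarP_entries (b c : ℝ) (h : b ^ 2 < 4 * (1 + c ^ 2))
    (lamp lamm : ℂ)
    (hp : lamp = (b + I * Real.sqrt (4 * (1 + c ^ 2) - b ^ 2)) / (2 * (1 - I * c)))
    (hm : lamm = (b - I * Real.sqrt (4 * (1 + c ^ 2) - b ^ 2)) / (2 * (1 - I * c)))
    (P : Matrix (Fin 2) (Fin 2) ℂ)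
    (hP : P = !![lamp, lamm; 1, 1]) :
    Pᴴ * P = !![2, 1 + (starRingEnd ℂ) lamp * lamm;
                1 + (starRingEnd ℂ) lamm * lamp, 2] ∧
    ‖1 + (starRingEnd ℂ) lamp * lamm‖ = |b| / Real.sqrt (1 + c ^ 2) := by
  set s := Real.sqrt (4 * (1 + c ^ 2) - b ^ 2)
  have hs : b ^ 2 + s ^ 2 = 4 * (1 + c ^ 2) := by
    rw [Real.sq_sqrt (by linarith)]; ring
  have hp_norm : ‖lamp‖ = 1 := hp ▸ norm_div_two_mul_one_sub_I_mul_eq_one hs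
  have hm_norm : ‖lamm‖ = 1 := by
    rw [hm, show (b : ℂ) - I * s = b + I * ((-s : ℝ) : ℂ) by push_cast; ring]
    exact norm_div_two_mul_one_sub_I_mul_eq_one (by rwa [neg_sq])
  have hp_unit : star lamp * lamp = 1 := by simp [conj_mul', hp_norm]
  have hm_unit : star lamm * lamm = 1 := by simp [conj_mul', hm_norm]
  have hsum : lamp + lamm = b / (1 - I * c) := by
    rw [hp, hm, ← add_div, show (b : ℂ) + I * s + (b - I * s) = 2 * b by ring,
      mul_div_mul_left _ _ two_ne_zero]
  refine ⟨hP ▸ conjTranspose_mul_self_of_star_mul_self_eq_one hp_unit hm_unit, ?_⟩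
  rw [← RCLike.star_def, one_add_star_mul_eq_star_mul_add hp_unit, norm_mul, norm_star, hp_norm,
    one_mul, hsum, norm_div, norm_real, Real.norm_eq_abs, norm_one_sub_I_mul]
end

section
/- Let 0 ≤ r < 1, and let b and c be real numbers with b² ≤ 4r²(1+c²). With λ± = (b ± i√(4(1+c²) − b²))/(2(1 − ic)) and P the 2×2 complex matrix with rows (λ₊, λ₋) and (1, 1), the spectral norm of the inverse satisfies ‖P⁻¹‖₂ ≤ 1/√(2(1 − r)). -/
/-!
Both eigenvalues λ± have modulus one, and λ₊ + λ₋ = b / (1 - ic) has modulus at most 2r.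
For `P = !![p, m; 1, 1]` with `|p| = |m| = 1` one computes
`‖P x‖² = 2‖x‖² + 2 Re (p̄ (p + m) x̄₀ x₁) ≥ (2 - |p + m|) ‖x‖²`,
so `P` is invertible with `‖P⁻¹‖ ≤ (2 - |p + m|)^(-1/2) ≤ (2(1 - r))^(-1/2)`.
-/

open Complex Matrix
open scoped Matrix.Norms.L2Operator

namespace Matrix

variable {𝕜 n : Type*} [RCLike 𝕜] [Fintype n] [DecidableEq n]

theorem l2_opNorm_inv_le_of_norm_le_mul_norm_toEuclideanCLM {A : Matrix n n 𝕜} {C : ℝ}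
    (hC : 0 ≤ C) (h : ∀ x, ‖x‖ ≤ C * ‖toEuclideanCLM (n := n) (𝕜 := 𝕜) A x‖) : ‖A⁻¹‖ ≤ C := by
  have hA : IsUnit A := by
    refine mulVec_injective_iff_isUnit.mp fun u v huv => ?_
    have := h (WithLp.toLp 2 (u - v))
    rwa [toEuclideanCLM_toLp, mulVec_sub, huv, sub_self, WithLp.toLp_zero, norm_zero,
      mul_zero, norm_le_zero_iff, WithLp.toLp_eq_zero, sub_eq_zero] at this
  rw [← l2_opNorm_toEuclideanCLM]
  refine ContinuousLinearMap.opNorm_le_bound _ hC fun y => ?_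
  have hy : toEuclideanCLM (n := n) (𝕜 := 𝕜) A (toEuclideanCLM (n := n) (𝕜 := 𝕜) A⁻¹ y) = y := by
    rw [← mul_apply_eq_comp, ← map_mul, mul_nonsing_inv _ ((isUnit_iff_isUnit_det A).mp hA),
      map_one, one_apply_eq_self]
  simpa only [hy] using h (toEuclideanCLM (n := n) (𝕜 := 𝕜) A⁻¹ y)

end Matrix

theorem Complex.two_sub_norm_add_mul_sum_sq_le {p m : ℂ} (hp : ‖p‖ = 1) (hm : ‖m‖ = 1)
    (u v : ℂ) :
    (2 - ‖p + m‖) * (‖u‖ ^ 2 + ‖v‖ ^ 2) ≤ ‖p * u + m * v‖ ^ 2 + ‖u + v‖ ^ 2 := by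
  have hexpand : ‖p * u + m * v‖ ^ 2 + ‖u + v‖ ^ 2
      = 2 * (‖u‖ ^ 2 + ‖v‖ ^ 2) + 2 * (starRingEnd ℂ u * v * (starRingEnd ℂ p * (p + m))).re := by
    have hpp : starRingEnd ℂ p * p = 1 := by
      rw [← Complex.normSq_eq_conj_mul_self, ← Complex.sq_norm, hp, one_pow, ofReal_one]
    have hfactor : starRingEnd ℂ u * v * (starRingEnd ℂ p * (p + m))
        = starRingEnd ℂ (p * u) * (m * v) + starRingEnd ℂ u * v := by
      rw [map_mul]; linear_combination starRingEnd ℂ u * v * hpp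
    rw [norm_add_sq (𝕜 := ℂ), norm_add_sq (𝕜 := ℂ), RCLike.inner_apply', RCLike.inner_apply',
      norm_mul, norm_mul, hp, hm, hfactor, Complex.add_re]
    simp only [RCLike.re_to_complex]
    ring
  have hre : -(‖p + m‖ * (‖u‖ ^ 2 + ‖v‖ ^ 2))
      ≤ 2 * (starRingEnd ℂ u * v * (starRingEnd ℂ p * (p + m))).re := by
    have hnorm : ‖starRingEnd ℂ u * v * (starRingEnd ℂ p * (p + m))‖ = ‖p + m‖ * (‖u‖ * ‖v‖) := by
      simp only [norm_mul, Complex.norm_conj, hp]; ring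
    have hre_ge := (abs_le.mp (Complex.abs_re_le_norm (starRingEnd ℂ u * v * (starRingEnd ℂ p * (p + m))))).1
    nlinarith [two_mul_le_add_sq ‖u‖ ‖v‖, norm_nonneg (p + m)]
  rw [hexpand]; linarith

theorem Matrix.l2_opNorm_inv_fin_two_le {p m : ℂ} (hp : ‖p‖ = 1) (hm : ‖m‖ = 1)
    (hpm : ‖p + m‖ < 2) : ‖(!![p, m; 1, 1])⁻¹‖ ≤ 1 / √(2 - ‖p + m‖) := by
  have hs : 0 < 2 - ‖p + m‖ := sub_pos.mpr hpm
  refine l2_opNorm_inv_le_of_norm_le_mul_norm_toEuclideanCLM (by positivity) fun x => ?_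
  rw [one_div, le_inv_mul_iff₀ (Real.sqrt_pos.mpr hs),
    ← pow_le_pow_iff_left₀ (by positivity) (norm_nonneg _) two_ne_zero, mul_pow,
    Real.sq_sqrt hs.le, EuclideanSpace.norm_sq_eq, EuclideanSpace.norm_sq_eq, Fin.sum_univ_two,
    Fin.sum_univ_two, ofLp_toEuclideanCLM]
  simp only [mulVec, dotProduct, Fin.sum_univ_two, of_apply, cons_val', cons_val_fin_one,
    cons_val_zero, cons_val_one, one_mul]
  exact Complex.two_sub_norm_add_mul_sum_sq_le hp hm _ _

theorem Complex.normSq_one_sub_I_mul_ofReal (c : ℝ) : normSq (1 - I * c) = 1 + c ^ 2 := by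
  simp only [normSq_apply, sub_re, one_re, mul_re, I_re, ofReal_re, zero_mul, I_im, ofReal_im,
    mul_zero, sub_self, sub_zero, sub_im, one_im, mul_im, one_mul, zero_add, zero_sub, mul_neg,
    neg_mul, neg_neg]
  ring

theorem norm_ofReal_add_I_mul_div_eq_one {b c s : ℝ} (h : b ^ 2 + s ^ 2 = 4 * (1 + c ^ 2)) :
    ‖(b + I * s) / (2 * (1 - I * c))‖ = 1 := by
  have hnum : normSq (b + I * s) = b ^ 2 + s ^ 2 := by
    simp only [normSq_apply, add_re, ofReal_re, mul_re, I_re, zero_mul, I_im, ofReal_im, mul_zero,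
      sub_self, add_zero, add_im, mul_im, one_mul, zero_add]
    ring
  rw [← sq_eq_sq₀ (norm_nonneg _) zero_le_one, Complex.sq_norm, normSq_div, normSq_mul,
    normSq_one_sub_I_mul_ofReal, hnum, h, normSq_ofNat, one_pow]
  exact (div_eq_one_iff_eq (by positivity)).mpr (by ring)

theorem norm_ofReal_div_one_sub_I_mul_le {r b c : ℝ} (hr : 0 ≤ r)
    (h : b ^ 2 ≤ 4 * r ^ 2 * (1 + c ^ 2)) : ‖(b : ℂ) / (1 - I * c)‖ ≤ 2 * r := by
  rw [← pow_le_pow_iff_left₀ (norm_nonneg _) (by positivity) two_ne_zero, Complex.sq_norm, normSq_div,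
    normSq_ofReal, normSq_one_sub_I_mul_ofReal, div_le_iff₀ (by positivity)]
  linarith

/-- Under the stability condition b² ≤ 4r²(1+c²) with 0 ≤ r < 1, the inverse of the
eigenvector matrix P = [[λ₊, λ₋], [1, 1]] (with λ± = (b ± i√(4(1+c²) − b²))/(2(1 − ic)))
satisfies the spectral norm bound ‖P⁻¹‖₂ ≤ 1/√(2(1 − r)). -/
theorem Pinv_spectral_norm_bound (r b c : ℝ) (hr0 : 0 ≤ r) (hr1 : r < 1)
    (h : b ^ 2 ≤ 4 * r ^ 2 * (1 + c ^ 2))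
    (lamp lamm : ℂ)
    (hp : lamp = (b + I * Real.sqrt (4 * (1 + c ^ 2) - b ^ 2)) / (2 * (1 - I * c)))
    (hm : lamm = (b - I * Real.sqrt (4 * (1 + c ^ 2) - b ^ 2)) / (2 * (1 - I * c)))
    (P : Matrix (Fin 2) (Fin 2) ℂ)
    (hP : P = !![lamp, lamm; 1, 1]) :
    ‖P⁻¹‖ ≤ 1 / Real.sqrt (2 * (1 - r)) := by
  set s := √(4 * (1 + c ^ 2) - b ^ 2)
  have hs : b ^ 2 + s ^ 2 = 4 * (1 + c ^ 2) := by
    have hr : r ^ 2 ≤ 1 := by nlinarith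
    rw [Real.sq_sqrt (by nlinarith [mul_le_mul_of_nonneg_right hr (by positivity : 0 ≤ 1 + c ^ 2)])]
    ring
  have hlamp : ‖lamp‖ = 1 := hp ▸ norm_ofReal_add_I_mul_div_eq_one hs
  have hlamm : ‖lamm‖ = 1 := by
    rw [hm, show (b : ℂ) - I * s = b + I * (-s : ℝ) by push_cast; ring]
    exact norm_ofReal_add_I_mul_div_eq_one (by linear_combination hs)
  have hsum : ‖lamp + lamm‖ ≤ 2 * r := by
    have hc : (1 : ℂ) - I * c ≠ 0 := by
      rw [← normSq_pos, normSq_one_sub_I_mul_ofReal]; positivity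
    have : lamp + lamm = b / (1 - I * c) := by rw [hp, hm]; field_simp; ring
    exact this ▸ norm_ofReal_div_one_sub_I_mul_le hr0 h
  calc ‖P⁻¹‖ ≤ 1 / √(2 - ‖lamp + lamm‖) :=
        hP ▸ Matrix.l2_opNorm_inv_fin_two_le hlamp hlamm (by linarith)
    _ ≤ 1 / √(2 * (1 - r)) := by gcongr; linarith
end

section
/- Let 0 ≤ r < 1, and let b and c be real numbers with b² ≤ 4r²(1+c²). Let G be the 2×2 complex matrix with rows (b/(1 − ic), −(1 + ic)/(1 − ic)) and (1, 0). Then for every natural number n and every y ∈ ℂ², the Euclidean norm satisfies |Gⁿy|₂ ≤ √(2/(1 − r))·|y|₂. -/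
/-!
Writing `K = √(1 + c²)`, `e = (1 + ic)/K` and `t = b/(2K)`, one has `‖e‖ = 1`, `|t| ≤ r` and
`G = !![2te, -e²; 1, 0]`. The hermitian form
`E(x, y) = |x|² - 2t Re(ē x ȳ) + |y|²` is invariant under `G`, and `|t| ≤ r` makes it
equivalent to the Euclidean norm: `(1 - r)|v|² ≤ E(v) ≤ (1 + r)|v|²`.
Hence `|Gⁿy|² ≤ (1 + r)/(1 - r) |y|² ≤ 2/(1 - r) |y|²`.
-/

open Complex Matrix ComplexConjugate

def amplificationMatrix (t : ℝ) (e : ℂ) : Matrix (Fin 2) (Fin 2) ℂ :=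
  !![2 * t * e, -e ^ 2; 1, 0]

noncomputable def energy (t : ℝ) (e : ℂ) (v : Fin 2 → ℂ) : ℝ :=
  ‖v 0‖ ^ 2 - 2 * t * (conj e * v 0 * conj (v 1)).re + ‖v 1‖ ^ 2

theorem exists_amplificationMatrix_eq {r : ℝ} (hr0 : 0 ≤ r) {b c : ℝ}
    (h : b ^ 2 ≤ 4 * r ^ 2 * (1 + c ^ 2)) :
    ∃ t e, |t| ≤ r ∧ ‖e‖ = 1 ∧
      !![b / (1 - I * c), -(1 + I * c) / (1 - I * c); 1, 0] = amplificationMatrix t e := by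
  set K := Real.sqrt (1 + c ^ 2)
  have hK0 : 0 < K := Real.sqrt_pos.2 (by positivity)
  have hKne : (K : ℂ) ≠ 0 := by exact_mod_cast hK0.ne'
  have hden : (1 - I * c) ≠ 0 := fun h0 => by simpa using congrArg re h0
  have hconj : (1 - I * c) * (1 + I * c) = K ^ 2 := by
    have hK2 : (K : ℂ) ^ 2 = 1 + c ^ 2 := by
      exact_mod_cast Real.sq_sqrt (by positivity : 0 ≤ 1 + c ^ 2)
    rw [hK2]; linear_combination -(c : ℂ) ^ 2 * I_sq
  have h00 : (b : ℂ) / (1 - I * c) = 2 * ((b / (2 * K) : ℝ) : ℂ) * ((1 + I * c) / K) := by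
    rw [div_eq_iff hden]; push_cast; field_simp; linear_combination -(b : ℂ) * hconj
  have h01 : -(1 + I * c) / (1 - I * c) = -((1 + I * c) / K) ^ 2 := by
    rw [neg_div, div_pow, neg_inj, div_eq_div_iff hden (pow_ne_zero 2 hKne)]
    linear_combination -(1 + I * c) * hconj
  refine ⟨b / (2 * K), (1 + I * c) / K, ?_, ?_, by rw [amplificationMatrix, h00, h01]⟩
  · refine abs_le_of_sq_le_sq ?_ hr0
    rw [div_pow, div_le_iff₀ (by positivity), mul_pow, Real.sq_sqrt (by positivity)]
    linarith
  · rw [norm_div, norm_real, Real.norm_of_nonneg hK0.le, div_eq_one_iff_eq hK0.ne',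
      Complex.norm_def]
    simp [normSq_apply, K, sq]

theorem energy_amplificationMatrix_mulVec (t : ℝ) {e : ℂ} (he : ‖e‖ = 1) (v : Fin 2 → ℂ) :
    energy t e (amplificationMatrix t e *ᵥ v) = energy t e v := by
  have he' : e.re * e.re + e.im * e.im = 1 := by
    rw [← normSq_apply, ← Complex.sq_norm, he, one_pow]
  simp only [energy, Complex.sq_norm, normSq_apply]
  simp only [mulVec, dotProduct, amplificationMatrix, sq, Fin.isValue, of_apply, cons_val',
    cons_val_fin_one, cons_val_zero, Fin.sum_univ_two, cons_val_one, neg_mul, add_re, mul_re,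
    re_ofNat, ofReal_re, im_ofNat, ofReal_im, mul_zero, sub_zero, mul_im, zero_mul, add_zero, neg_re,
    neg_sub, add_im, neg_im, neg_add_rev, one_mul, conj_re, conj_im, sub_neg_eq_add, mul_neg]
  set a := e.re; set b := e.im; set p := (v 0).re; set q := (v 0).im
  set u := (v 1).re; set w := (v 1).im
  -- the defect is `(|e|² - 1)(|e|²|v₁|² + |v₁|² - 2t Re(ē v₀ v̄₁))`
  linear_combination (-2 * t * ((a * p + b * q) * u + (a * q - b * p) * w)
    + (a * a + b * b + 1) * (u * u + w * w)) * he'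

theorem energy_amplificationMatrix_pow_mulVec (t : ℝ) {e : ℂ} (he : ‖e‖ = 1) (n : ℕ)
    (v : Fin 2 → ℂ) :
    energy t e (amplificationMatrix t e ^ n *ᵥ v) = energy t e v := by
  induction n with
  | zero => rw [pow_zero, one_mulVec]
  | succ n ih => rw [pow_succ', ← mulVec_mulVec, energy_amplificationMatrix_mulVec t he, ih]

theorem abs_energy_sub_le {r t : ℝ} (ht : |t| ≤ r) {e : ℂ} (he : ‖e‖ = 1) (v : Fin 2 → ℂ) :
    |energy t e v - (‖v 0‖ ^ 2 + ‖v 1‖ ^ 2)| ≤ r * (‖v 0‖ ^ 2 + ‖v 1‖ ^ 2) := by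
  have hcross : |(conj e * v 0 * conj (v 1)).re| ≤ ‖v 0‖ * ‖v 1‖ := by
    calc _ ≤ ‖conj e * v 0 * conj (v 1)‖ := abs_re_le_norm _
      _ = ‖v 0‖ * ‖v 1‖ := by simp [he]
  have hamgm : 2 * ‖v 0‖ * ‖v 1‖ ≤ ‖v 0‖ ^ 2 + ‖v 1‖ ^ 2 := two_mul_le_add_sq _ _
  calc |energy t e v - (‖v 0‖ ^ 2 + ‖v 1‖ ^ 2)|
      = 2 * |t| * |(conj e * v 0 * conj (v 1)).re| := by
        rw [energy, ← abs_two, ← abs_mul, ← abs_mul, ← abs_neg]; ring_nf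
    _ ≤ r * (‖v 0‖ ^ 2 + ‖v 1‖ ^ 2) := by
        nlinarith [abs_nonneg t, abs_nonneg (conj e * v 0 * conj (v 1)).re]

/-- Power-boundedness of the amplification matrix (linear stability, Lemma 5.1):
under the stability condition b² ≤ 4r²(1+c²) with 0 ≤ r < 1, the matrix
G = [[b/(1−ic), −(1+ic)/(1−ic)], [1, 0]] satisfies |Gⁿy|₂ ≤ √(2/(1−r))·|y|₂
for every n ∈ ℕ and y ∈ ℂ², in the Euclidean norm. -/
theorem amplification_matrix_power_bounded (r b c : ℝ) (hr0 : 0 ≤ r) (hr1 : r < 1)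
    (h : b ^ 2 ≤ 4 * r ^ 2 * (1 + c ^ 2))
    (G : Matrix (Fin 2) (Fin 2) ℂ)
    (hG : G = !![b / (1 - I * c), -(1 + I * c) / (1 - I * c); 1, 0]) :
    ∀ (n : ℕ) (y : Fin 2 → ℂ),
      Real.sqrt (‖(G ^ n).mulVec y 0‖ ^ 2 +
        ‖(G ^ n).mulVec y 1‖ ^ 2) ≤
      Real.sqrt (2 / (1 - r)) *
        Real.sqrt (‖y 0‖ ^ 2 + ‖y 1‖ ^ 2) := by
  intro n y
  obtain ⟨t, e, ht, he, hGte⟩ := exists_amplificationMatrix_eq hr0 h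
  rw [hG, hGte]
  set x := amplificationMatrix t e ^ n *ᵥ y
  obtain ⟨hx, -⟩ := abs_le.mp (abs_energy_sub_le ht he x)
  obtain ⟨-, hy⟩ := abs_le.mp (abs_energy_sub_le ht he y)
  rw [energy_amplificationMatrix_pow_mulVec t he] at hx
  have hy0 : 0 ≤ ‖y 0‖ ^ 2 + ‖y 1‖ ^ 2 := by positivity
  rw [← Real.sqrt_mul (div_nonneg zero_le_two (by linarith)), div_mul_eq_mul_div]
  refine Real.sqrt_le_sqrt ((le_div_iff₀ (by linarith)).mpr ?_)
  nlinarith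
end

section
/- Let 0 ≤ r < 1, and let b and c be real numbers with b² ≤ 4r²(1+c²). Suppose a sequence (x_n) of complex numbers satisfies the two-step recursion (1 − ic)x_{n+1} − b x_n + (1 + ic)x_{n−1} = 0 for all n ≥ 1. Then for every n, |x_n| ≤ √(2/(1 − r))·√(|x₀|² + |x₁|²). -/
/-!
The characteristic polynomial `(1 - ic) ζ² - b ζ + (1 + ic)` has the roots
`z± = (b ± i d) / (2 (1 - ic))` with `d = √(4 (1 + c²) - b²)`, and `|b ± i d| = 2 |1 - ic|` puts
both on the unit circle. Hence `x (n+1) - z∓ x n = z±ⁿ (x 1 - z∓ x 0)` has modulus at most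
`|x 0| + |x 1|`, and subtracting the two gives `|z₊ - z₋| |x n| ≤ 2 (|x 0| + |x 1|)`. The root gap
`|z₊ - z₋|² = d² / (1 + c²)` is at least `4 (1 - r²)` exactly when `b² ≤ 4 r² (1 + c²)`.
-/

open Complex ComplexConjugate

section Recurrence

variable {R : Type*} [CommRing R] {z₁ z₂ : R} {x : ℕ → R}

theorem sub_mul_eq_pow_mul_of_recurrence
    (hx : ∀ n, x (n + 2) = (z₁ + z₂) * x (n + 1) - z₁ * z₂ * x n) (n : ℕ) :
    x (n + 1) - z₂ * x n = z₁ ^ n * (x 1 - z₂ * x 0) := by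
  induction n with
  | zero => ring
  | succ n ih => rw [hx, pow_succ, mul_right_comm (z₁ ^ n), ← ih]; ring

theorem binet_of_recurrence
    (hx : ∀ n, x (n + 2) = (z₁ + z₂) * x (n + 1) - z₁ * z₂ * x n) (n : ℕ) :
    (z₁ - z₂) * x n = z₁ ^ n * (x 1 - z₂ * x 0) - z₂ ^ n * (x 1 - z₁ * x 0) := by
  have hx' : ∀ n, x (n + 2) = (z₂ + z₁) * x (n + 1) - z₂ * z₁ * x n := by
    intro n; rw [hx, add_comm, mul_comm z₁]
  rw [← sub_mul_eq_pow_mul_of_recurrence hx, ← sub_mul_eq_pow_mul_of_recurrence hx']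
  ring

end Recurrence

theorem norm_sub_mul_norm_le_of_recurrence {𝕜 : Type*} [NormedField 𝕜] {z₁ z₂ : 𝕜}
    {x : ℕ → 𝕜} (hz₁ : ‖z₁‖ = 1) (hz₂ : ‖z₂‖ = 1)
    (hx : ∀ n, x (n + 2) = (z₁ + z₂) * x (n + 1) - z₁ * z₂ * x n) (n : ℕ) :
    ‖z₁ - z₂‖ * ‖x n‖ ≤ 2 * (‖x 0‖ + ‖x 1‖) := by
  have hstart : ∀ z : 𝕜, ‖z‖ = 1 → ‖x 1 - z * x 0‖ ≤ ‖x 0‖ + ‖x 1‖ := fun z hz ↦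
    (norm_sub_le _ _).trans_eq (by rw [norm_mul, hz, one_mul, add_comm])
  calc ‖z₁ - z₂‖ * ‖x n‖
      = ‖z₁ ^ n * (x 1 - z₂ * x 0) - z₂ ^ n * (x 1 - z₁ * x 0)‖ := by
        rw [← norm_mul, binet_of_recurrence hx]
    _ ≤ ‖x 1 - z₂ * x 0‖ + ‖x 1 - z₁ * x 0‖ := by
        refine (norm_sub_le _ _).trans_eq ?_
        rw [norm_mul, norm_mul, norm_pow, norm_pow, hz₁, hz₂, one_pow, one_mul, one_mul]
    _ ≤ 2 * (‖x 0‖ + ‖x 1‖) := by linarith [hstart z₁ hz₁, hstart z₂ hz₂]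

theorem recurrence_of_vieta {K : Type*} [Field K] {u β γ z₁ z₂ : K} {x : ℕ → K}
    (hu : u ≠ 0) (hsum : u * (z₁ + z₂) = β) (hprod : u * (z₁ * z₂) = γ)
    (hx : ∀ n, u * x (n + 2) - β * x (n + 1) + γ * x n = 0) (n : ℕ) :
    x (n + 2) = (z₁ + z₂) * x (n + 1) - z₁ * z₂ * x n := by
  refine mul_left_cancel₀ hu ?_
  linear_combination hx n - x (n + 1) * hsum + x n * hprod

/-- `charRoot u b d` and `charRoot u b (-d)` are the roots of `u ζ² - b ζ + conj u`
when `b² + d² = 4 |u|²`. -/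
noncomputable def charRoot (u : ℂ) (b d : ℝ) : ℂ := (b + d * I) / (2 * u)

section CharRoot

variable {u : ℂ} {b d : ℝ}

theorem norm_charRoot (hu : u ≠ 0) (hbd : b ^ 2 + d ^ 2 = 4 * normSq u) :
    ‖charRoot u b d‖ = 1 := by
  have : ‖(b : ℂ) + d * I‖ = ‖2 * u‖ := by
    rw [← sq_eq_sq₀ (norm_nonneg _) (norm_nonneg _), Complex.sq_norm, Complex.sq_norm,
      normSq_mul, normSq_ofNat, normSq_add_mul_I, hbd]
    ring
  rw [charRoot, norm_div, this, div_self (by simpa using hu)]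

theorem mul_charRoot_add_charRoot_neg (hu : u ≠ 0) :
    u * (charRoot u b d + charRoot u b (-d)) = b := by
  simp only [charRoot]; field_simp; push_cast; ring

theorem mul_charRoot_mul_charRoot_neg (hu : u ≠ 0) (hbd : b ^ 2 + d ^ 2 = 4 * normSq u) :
    u * (charRoot u b d * charRoot u b (-d)) = conj u := by
  have hbdC : (b : ℂ) ^ 2 + (d : ℂ) ^ 2 = 4 * (u * conj u) := by
    rw [mul_conj]; exact_mod_cast hbd
  simp only [charRoot]; field_simp; push_cast
  linear_combination -(d : ℂ) ^ 2 * I_sq + hbdC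

theorem charRoot_sub_charRoot_neg (hu : u ≠ 0) :
    charRoot u b d - charRoot u b (-d) = d * I / u := by
  simp only [charRoot]; field_simp; push_cast; ring

end CharRoot

theorem le_sqrt_mul_sqrt_of_mul_le {r e A a₀ a₁ : ℝ} (hr0 : 0 ≤ r) (hr1 : r < 1)
    (he : 4 * (1 - r ^ 2) ≤ e ^ 2) (he0 : 0 ≤ e) (hA : 0 ≤ A)
    (hAe : e * A ≤ 2 * (a₀ + a₁)) :
    A ≤ Real.sqrt (2 / (1 - r)) * Real.sqrt (a₀ ^ 2 + a₁ ^ 2) := by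
  rw [← Real.sqrt_mul (div_nonneg zero_le_two (by linarith))]
  apply Real.le_sqrt_of_sq_le
  rw [div_mul_eq_mul_div, le_div_iff₀ (by linarith)]
  have : (e * A) ^ 2 ≤ (2 * (a₀ + a₁)) ^ 2 := pow_le_pow_left₀ (by positivity) hAe 2
  nlinarith [sq_nonneg (a₀ - a₁), mul_le_mul_of_nonneg_left he (sq_nonneg A),
    mul_nonneg (mul_nonneg (sq_nonneg A) hr0) (sub_nonneg.2 hr1.le)]

/-- Scalar form of linear stability: if b² ≤ 4r²(1+c²) with 0 ≤ r < 1 and the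
sequence (xₙ) of complex numbers satisfies the two-step recursion
(1 − ic)x_{n+1} − b xₙ + (1 + ic)x_{n−1} = 0 for all n ≥ 1, then
|xₙ| ≤ √(2/(1 − r))·√(|x₀|² + |x₁|²) for every n. -/
theorem two_step_recursion_stability (r b c : ℝ) (hr0 : 0 ≤ r) (hr1 : r < 1)
    (h : b ^ 2 ≤ 4 * r ^ 2 * (1 + c ^ 2))
    (x : ℕ → ℂ)
    (hrec : ∀ n : ℕ, 1 ≤ n →
      (1 - I * c) * x (n + 1) - b * x n + (1 + I * c) * x (n - 1) = 0) :
    ∀ n : ℕ, ‖x n‖ ≤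
      Real.sqrt (2 / (1 - r)) *
        Real.sqrt (‖x 0‖ ^ 2 + ‖x 1‖ ^ 2) := by
  set u : ℂ := 1 - I * c
  have hnormSq : normSq u = 1 + c ^ 2 := by simp [u, normSq_apply]; ring
  have hu : u ≠ 0 := normSq_pos.1 (by rw [hnormSq]; positivity)
  have hconj : conj u = 1 + I * c := by simp [u]
  set d := Real.sqrt (4 * (1 + c ^ 2) - b ^ 2)
  have hdisc : 4 * (1 + c ^ 2) * (1 - r ^ 2) ≤ 4 * (1 + c ^ 2) - b ^ 2 := by linarith
  have hr2 : 0 ≤ 1 - r ^ 2 := by nlinarith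
  have hd : d ^ 2 = 4 * (1 + c ^ 2) - b ^ 2 :=
    Real.sq_sqrt ((mul_nonneg (by positivity) hr2).trans hdisc)
  have hbd : b ^ 2 + d ^ 2 = 4 * normSq u := by rw [hd, hnormSq]; ring
  have hx := recurrence_of_vieta (z₁ := charRoot u b d) (z₂ := charRoot u b (-d)) hu
    (mul_charRoot_add_charRoot_neg hu) (mul_charRoot_mul_charRoot_neg hu hbd)
    (fun n ↦ by simpa [hconj] using hrec (n + 1) n.succ_pos)
  have hgap : 4 * (1 - r ^ 2) ≤ ‖charRoot u b d - charRoot u b (-d)‖ ^ 2 := by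
    rw [charRoot_sub_charRoot_neg hu, Complex.sq_norm, map_div₀, normSq_mul, normSq_I,
      normSq_ofReal, mul_one, ← sq, hd, hnormSq, le_div_iff₀ (by positivity)]
    linarith
  intro n
  exact le_sqrt_mul_sqrt_of_mul_le hr0 hr1 hgap (norm_nonneg _) (norm_nonneg _)
    (norm_sub_mul_norm_le_of_recurrence (norm_charRoot hu hbd)
      (norm_charRoot hu (by rwa [neg_sq])) hx n)
end
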